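/- arXiv:1003.2556 — 4 statements merged into one kernel-verified Lean document; each statement's English description precedes it below -/
import Mathlib

section
/- For integers 1 ≤ k₁ < k₂ < ... < kₘ ≤ n and nonnegative integers c₁,...,cₘ, the integral over the unit cube [0,1]^n of the product ∏_{j=1}^m (x_{(k_j)})^{c_j}, where x_{(k)} denotes the k-th order statistic of (x₁,...,xₙ), equals (n! / (n + ∑_{j=1}^m c_j)!) · ∏_{j=1}^m [(k_j - 1 + ∑_{i=1}^j c_i)! / (k_j - 1 + ∑_{i=1}^{j-1} c_i)!]. -/
open MeasureTheory Finset

/-- The `k`-th order statistic of `x : Fin n → ℝ`, with conventions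
`oStat x 0 = 0` and `oStat x k = 1` for `k > n`. For `1 ≤ k ≤ n` it is the
`k`-th smallest coordinate of `x`. -/
noncomputable def oStat {n : ℕ} (x : Fin n → ℝ) (k : ℕ) : ℝ :=
  if k = 0 then 0
  else if k ≤ n then ((Finset.univ.val.map x).sort (· ≤ ·)).getD (k - 1) 0
  else 1

/-- The `k`-th order statistic of the subfamily `(x i)_{i ∈ S}`. -/
noncomputable def oStatS {n : ℕ} (S : Finset (Fin n)) (x : Fin n → ℝ) (k : ℕ) : ℝ :=
  ((S.val.map x).sort (· ≤ ·)).getD (k - 1) 0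

/-!
Almost every point of the cube has distinct coordinates, so up to a null set the cube is the
disjoint union of the `n!` preimages of the ordered simplex `0 ≤ y₀ ≤ ⋯ ≤ yₙ₋₁ ≤ 1` under
the coordinate permutations, and on the piece belonging to `σ` the order statistics of `x` are the
coordinates of `x ∘ σ`. The integral is therefore `n!` times the integral of a monomial
`∏ yᵢ ^ aᵢ` over the simplex, where `aᵢ` collects the exponents `c_j` with `k_j = i + 1`.
Integrating out the largest coordinate, by induction on `n`, the monomial integrates over
`{0 ≤ y₀ ≤ ⋯ ≤ yₙ₋₁ ≤ t}` to
`t ^ (n + |a|) / (n + |a|)! * ∏ᵢ (i + a₀ + ⋯ + aᵢ)! / (i + a₀ + ⋯ + aᵢ₋₁)!`,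
and the factors with `aᵢ = 0` are `1`.
-/

open scoped Nat

theorem sort_map_univ_eq_ofFn_comp_sort {α : Type*} [LinearOrder α] {n : ℕ} (x : Fin n → α) :
    (univ.val.map x).sort (· ≤ ·) = List.ofFn (x ∘ Tuple.sort x) := by
  refine List.Perm.eq_of_pairwise' (r := (· ≤ ·)) (Multiset.pairwise_sort _ _)
    (Tuple.monotone_sort x).sortedLE_ofFn.pairwise (Multiset.coe_eq_coe.1 ?_)
  rw [Multiset.sort_eq, Multiset.coe_eq_coe.2 ((Tuple.sort x).ofFn_comp_perm x)]
  simp [Fin.univ_val_map]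

theorem oStat_succ {n : ℕ} (x : Fin n → ℝ) (i : Fin n) :
    oStat x (i + 1) = x (Tuple.sort x i) := by
  rw [oStat, if_neg (Nat.succ_ne_zero _), if_pos (Nat.succ_le_of_lt i.isLt),
    sort_map_univ_eq_ofFn_comp_sort]
  simp

def orderedSimplex (n : ℕ) (t : ℝ) : Set (Fin n → ℝ) :=
  {x | Monotone x ∧ ∀ i, x i ∈ Set.Icc 0 t}

theorem orderedSimplex_subset_Icc (n : ℕ) (t : ℝ) :
    orderedSimplex n t ⊆ Set.Icc 0 (fun _ => t) :=
  fun _ hx => ⟨fun i => (hx.2 i).1, fun i => (hx.2 i).2⟩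

theorem isClosed_orderedSimplex (n : ℕ) (t : ℝ) : IsClosed (orderedSimplex n t) := by
  simp only [orderedSimplex, Set.ofPred_and, Set.ofPred_forall]
  exact isClosed_monotone.inter <| isClosed_iInter fun i =>
    isClosed_Icc.preimage (continuous_apply i)

theorem isCompact_orderedSimplex (n : ℕ) (t : ℝ) : IsCompact (orderedSimplex n t) :=
  isCompact_Icc.of_isClosed_subset (isClosed_orderedSimplex n t) (orderedSimplex_subset_Icc n t)

theorem snoc_mem_orderedSimplex_iff {n : ℕ} {t s : ℝ} {z : Fin n → ℝ} :
    (Fin.snoc z s : Fin (n + 1) → ℝ) ∈ orderedSimplex (n + 1) t ↔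
      s ∈ Set.Icc 0 t ∧ z ∈ orderedSimplex n s := by
  simp only [orderedSimplex, Set.mem_ofPred_eq, Fin.forall_fin_succ', Fin.snoc_castSucc,
    Fin.snoc_last, Set.mem_Icc]
  constructor
  · rintro ⟨hmono, hz, hs⟩
    have hle : ∀ i, z i ≤ s := fun i => by
      simpa using hmono (Fin.castSucc_lt_last i).le
    refine ⟨hs, fun i j hij => ?_, fun i => ⟨(hz i).1, hle i⟩⟩
    simpa using hmono (Fin.castSucc_le_castSucc_iff.2 hij)
  · rintro ⟨⟨hs0, hst⟩, hmono, hz⟩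
    refine ⟨fun i j hij => ?_, fun i => ⟨(hz i).1, (hz i).2.trans hst⟩, hs0, hst⟩
    induction j using Fin.lastCases with
    | last => induction i using Fin.lastCases <;> simp [hz]
    | cast j =>
      induction i using Fin.lastCases with
      | last => exact absurd hij (not_le.2 (Fin.castSucc_lt_last j))
      | cast i => simpa using hmono (Fin.castSucc_le_castSucc_iff.1 hij)

theorem integral_orderedSimplex_succ {n : ℕ} {E : Type*} [NormedAddCommGroup E]
    [NormedSpace ℝ E] {t : ℝ} (f : (Fin (n + 1) → ℝ) → E)
    (hf : IntegrableOn f (orderedSimplex (n + 1) t)) :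
    ∫ x in orderedSimplex (n + 1) t, f x =
      ∫ s in Set.Icc 0 t, ∫ z in orderedSimplex n s, f (Fin.snoc z s) := by
  classical
  set e := (MeasurableEquiv.piFinSuccAbove (fun _ : Fin (n + 1) => ℝ) (Fin.last n)).symm
  have he : ∀ p, e p = Fin.snoc p.2 p.1 := fun p => by simp [e]; rfl
  have hmp : MeasurePreserving e (volume.prod volume) volume :=
    (volume_preserving_piFinSuccAbove (fun _ : Fin (n + 1) => ℝ) (Fin.last n)).symm
  have hmeas := (isClosed_orderedSimplex (n + 1) t).measurableSet
  have hf' : Integrable (fun p => (orderedSimplex (n + 1) t).indicator f (e p))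
      (volume.prod volume) :=
    (hmp.integrable_comp_emb e.measurableEmbedding).2 (hf.integrable_indicator hmeas)
  have hslice : ∀ s, ∫ z, (orderedSimplex (n + 1) t).indicator f (Fin.snoc z s) =
      (Set.Icc 0 t).indicator (fun s => ∫ z in orderedSimplex n s, f (Fin.snoc z s)) s := by
    intro s
    by_cases hs : s ∈ Set.Icc 0 t
    · rw [Set.indicator_of_mem hs,
        ← integral_indicator (isClosed_orderedSimplex n s).measurableSet]
      congr 1 with z
      simp only [Set.indicator_apply, snoc_mem_orderedSimplex_iff, hs, true_and]
    · simp [snoc_mem_orderedSimplex_iff, hs]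
  rw [← integral_indicator hmeas, ← hmp.integral_comp', integral_prod _ hf',
    ← integral_indicator measurableSet_Icc]
  simp_rw [he, hslice]

theorem integral_orderedSimplex_prod_pow (n : ℕ) (a : Fin n → ℕ) {t : ℝ} (ht : 0 ≤ t) :
    ∫ x in orderedSimplex n t, ∏ i, x i ^ a i =
      t ^ (n + ∑ i, a i) / (n + ∑ i, a i)! *
        ∏ i, ((i + ∑ j ∈ Iic i, a j)! : ℝ) / (i + ∑ j ∈ Iio i, a j)! := by
  induction n generalizing t with
  | zero =>
    have : orderedSimplex 0 t = Set.univ := by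
      ext x; simp [orderedSimplex, Subsingleton.monotone]
    simp [this, Measure.real, volume_pi]
  | succ n ih =>
    set S := ∑ i : Fin n, a i.castSucc
    set C : ℝ := ((n + S)! : ℝ)⁻¹ * ∏ i : Fin n,
      ((i + ∑ j ∈ Iic i, a j.castSucc)! : ℝ) / (i + ∑ j ∈ Iio i, a j.castSucc)!
    have hslice : ∀ s ∈ Set.Icc 0 t,
        ∫ z in orderedSimplex n s, ∏ i, (Fin.snoc z s : Fin (n + 1) → ℝ) i ^ a i =
          C * s ^ (a (Fin.last n) + (n + S)) := by
      intro s hs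
      simp only [Fin.prod_univ_castSucc, Fin.snoc_castSucc, Fin.snoc_last]
      rw [integral_mul_const, ih _ hs.1]
      ring
    have hf : IntegrableOn (fun x : Fin (n + 1) → ℝ => ∏ i, x i ^ a i)
        (orderedSimplex (n + 1) t) :=
      (by fun_prop : Continuous _).continuousOn.integrableOn_compact (isCompact_orderedSimplex _ _)
    rw [integral_orderedSimplex_succ _ hf, setIntegral_congr_fun measurableSet_Icc hslice,
      integral_Icc_eq_integral_Ioc, ← intervalIntegral.integral_of_le ht,
      intervalIntegral.integral_const_mul, integral_pow]
    simp only [C, Fin.prod_univ_castSucc, Fin.sum_univ_castSucc, Fin.val_castSucc,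
      Fin.val_last, ← Fin.map_castSuccEmb_Iio, sum_map, Fin.coe_castSuccEmb,
      Iic_eq_cons_Iio, sum_cons, Fin.Iio_last_eq_map, zero_pow (Nat.succ_ne_zero _), sub_zero]
    rw [show n + 1 + (S + a (Fin.last n)) = a (Fin.last n) + (n + S) + 1 by omega,
      show n + (a (Fin.last n) + S) = a (Fin.last n) + (n + S) by omega, Nat.factorial_succ]
    push_cast
    field_simp
    exact mul_comm _ _

theorem addHaar_setOf_not_injective {ι : Type*} [Fintype ι] (μ : Measure (ι → ℝ))
    [μ.IsAddHaarMeasure] : μ {x | ¬ Function.Injective x} = 0 := by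
  classical
  let L : ι × ι → (ι → ℝ) →ₗ[ℝ] ℝ := fun p =>
    (LinearMap.proj p.1 : (ι → ℝ) →ₗ[ℝ] ℝ) - LinearMap.proj p.2
  have hsub : {x : ι → ℝ | ¬ Function.Injective x} ⊆
      ⋃ p : {p : ι × ι // p.1 ≠ p.2}, (LinearMap.ker (L p) : Set (ι → ℝ)) := by
    intro x hx
    simp only [Function.Injective, not_forall] at hx
    obtain ⟨i, j, hij, hne⟩ := hx
    exact Set.mem_iUnion.2 ⟨⟨(i, j), hne⟩, by simp [L, hij]⟩
  refine measure_mono_null hsub (measure_iUnion_null fun p => Measure.addHaar_submodule μ _ ?_)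
  intro htop
  have : Pi.single p.1.1 1 ∈ LinearMap.ker (L p) := htop ▸ Submodule.mem_top
  simp [L, p.2.symm] at this

theorem mem_Icc_iff_exists_comp_perm_mem_orderedSimplex {n : ℕ} {t : ℝ} {x : Fin n → ℝ} :
    x ∈ Set.Icc 0 (fun _ => t) ↔
      ∃ σ : Equiv.Perm (Fin n), x ∘ σ ∈ orderedSimplex n t := by
  constructor
  · exact fun hx => ⟨Tuple.sort x, Tuple.monotone_sort x, fun i => ⟨hx.1 _, hx.2 _⟩⟩
  · rintro ⟨σ, -, hσ⟩
    exact ⟨fun i => by simpa using (hσ (σ.symm i)).1,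
      fun i => by simpa using (hσ (σ.symm i)).2⟩

theorem integral_Icc_comp_sort {n : ℕ} {E : Type*} [NormedAddCommGroup E] [NormedSpace ℝ E]
    {t : ℝ} (G : (Fin n → ℝ) → E) (hG : IntegrableOn G (orderedSimplex n t)) :
    ∫ x in Set.Icc 0 (fun _ => t), G (x ∘ Tuple.sort x) =
      n ! • ∫ y in orderedSimplex n t, G y := by
  let M : Equiv.Perm (Fin n) → (Fin n → ℝ) ≃ᵐ (Fin n → ℝ) := fun σ =>
    MeasurableEquiv.piCongrLeft (fun _ => ℝ) σ.symm
  have hM : ∀ σ x, M σ x = x ∘ σ := fun σ x => by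
    ext i; simp [M, MeasurableEquiv.coe_piCongrLeft, Equiv.piCongrLeft_apply]
  have hmp : ∀ σ, MeasurePreserving (M σ) := fun σ =>
    volume_measurePreserving_piCongrLeft _ _
  let cell : Equiv.Perm (Fin n) → Set (Fin n → ℝ) := fun σ => M σ ⁻¹' orderedSimplex n t
  have hmeas : ∀ σ, MeasurableSet (cell σ) := fun σ =>
    (M σ).measurable (isClosed_orderedSimplex n t).measurableSet
  have hcover : Set.Icc 0 (fun _ => t) = ⋃ σ, cell σ := by
    ext x
    simp only [cell, Set.mem_iUnion, Set.mem_preimage, hM]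
    exact mem_Icc_iff_exists_comp_perm_mem_orderedSimplex
  have hsort : ∀ σ, ∀ x ∈ cell σ, G (x ∘ Tuple.sort x) = G (M σ x) := fun σ x hx => by
    rw [hM, Tuple.unique_monotone (Tuple.monotone_sort x) (hM σ x ▸ hx.1)]
  have hdisj : Pairwise (Function.onFun (AEDisjoint volume) cell) := by
    intro σ τ hστ
    refine measure_mono_null (fun x ⟨hσ, hτ⟩ => ?_)
      (addHaar_setOf_not_injective (volume : Measure (Fin n → ℝ)))
    rw [Set.mem_preimage, hM] at hσ hτ
    refine fun hinj => hστ ?_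
    exact Equiv.ext fun i => hinj (congrFun (Tuple.unique_monotone hσ.1 hτ.1) i)
  have hint : ∀ σ, IntegrableOn (fun x => G (x ∘ Tuple.sort x)) (cell σ) := fun σ =>
    (((hmp σ).integrableOn_comp_preimage (M σ).measurableEmbedding).2 hG).congr_fun
      (fun x hx => (hsort σ x hx).symm) (hmeas σ)
  calc ∫ x in Set.Icc 0 (fun _ => t), G (x ∘ Tuple.sort x)
      = ∑' σ, ∫ x in cell σ, G (x ∘ Tuple.sort x) := by
        rw [hcover, integral_iUnion_ae (fun σ => (hmeas σ).nullMeasurableSet) hdisj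
          (integrableOn_finite_iUnion.2 hint)]
    _ = ∑ _σ : Equiv.Perm (Fin n), ∫ y in orderedSimplex n t, G y := by
        rw [tsum_fintype]
        refine sum_congr rfl fun σ _ => ?_
        rw [setIntegral_congr_fun (hmeas σ) (hsort σ),
          (hmp σ).setIntegral_preimage_emb (M σ).measurableEmbedding]
    _ = n ! • ∫ y in orderedSimplex n t, G y := by
        rw [sum_const, card_univ, Fintype.card_perm, Fintype.card_fin]

theorem prod_comp_pow_eq_prod_pow_sum_fiber {ι κ M : Type*} [Fintype ι] [Fintype κ]
    [DecidableEq κ] [CommMonoid M] (y : κ → M) (g : ι → κ) (c : ι → ℕ) :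
    ∏ j, y (g j) ^ c j = ∏ i, y i ^ ∑ j with g j = i, c j := by
  rw [← prod_fiberwise univ g]
  refine prod_congr rfl fun i _ => ?_
  rw [← prod_pow_eq_pow_sum]
  exact prod_congr rfl fun j hj => by rw [(mem_filter.1 hj).2]

section StrictMono

variable {ι κ M : Type*} [Fintype ι] [LinearOrder ι] [LocallyFiniteOrderBot ι]
  [LinearOrder κ] [LocallyFiniteOrderBot κ] [AddCommMonoid M] {g : ι → κ}

theorem StrictMono.sum_Iic_sum_fiber (hg : StrictMono g) (c : ι → M) (j : ι) :
    ∑ l ∈ Iic (g j), ∑ i with g i = l, c i = ∑ i ∈ Iic j, c i := by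
  rw [sum_fiberwise_eq_sum_filter]
  congr 1
  ext i
  simp [hg.le_iff_le]

theorem StrictMono.sum_Iio_sum_fiber (hg : StrictMono g) (c : ι → M) (j : ι) :
    ∑ l ∈ Iio (g j), ∑ i with g i = l, c i = ∑ i ∈ Iio j, c i := by
  rw [sum_fiberwise_eq_sum_filter]
  congr 1
  ext i
  simp [hg.lt_iff_lt]

end StrictMono

theorem prod_factorial_div_factorial_sum_fiber {m n : ℕ} {g : Fin m → Fin n} (hg : StrictMono g)
    (c : Fin m → ℕ) :
    ∏ i, ((i + ∑ l ∈ Iic i, ∑ j with g j = l, c j)! : ℝ) /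
        (i + ∑ l ∈ Iio i, ∑ j with g j = l, c j)! =
      ∏ j, ((g j + ∑ i ∈ Iic j, c i)! : ℝ) / (g j + ∑ i ∈ Iio j, c i)! := by
  refine (Fintype.prod_of_injective g hg.injective _ _ (fun i hi => ?_) fun j => ?_).symm
  · have hfiber : ∑ j with g j = i, c j = 0 :=
      sum_eq_zero fun j hj => absurd ⟨j, (mem_filter.1 hj).2⟩ hi
    rw [Iic_eq_cons_Iio, sum_cons, hfiber, zero_add, div_self (by positivity)]
  · rw [hg.sum_Iic_sum_fiber, hg.sum_Iio_sum_fiber]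

theorem stmt0 (n m : ℕ) (k c : Fin m → ℕ)
    (hk1 : ∀ j, 1 ≤ k j) (hkn : ∀ j, k j ≤ n) (hmono : StrictMono k) :
    (∫ x in Set.Icc (0 : Fin n → ℝ) 1, ∏ j, (oStat x (k j)) ^ (c j)) =
      (Nat.factorial n : ℝ) / (Nat.factorial (n + ∑ j, c j) : ℝ) *
        ∏ j, (Nat.factorial (k j - 1 + ∑ i ∈ Finset.Iic j, c i) : ℝ) /
          (Nat.factorial (k j - 1 + ∑ i ∈ Finset.Iio j, c i) : ℝ) := by
  let g : Fin m → Fin n := fun j => ⟨k j - 1, by have := hk1 j; have := hkn j; omega⟩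
  have hg : StrictMono g := fun i j hij => by
    have := hmono hij; have := hk1 i
    simp only [g, Fin.mk_lt_mk]; omega
  have hoStat : ∀ x j, oStat x (k j) = (x ∘ Tuple.sort x) (g j) := fun x j => by
    rw [Function.comp_apply, ← oStat_succ x (g j)]
    congr 1
    have := hk1 j
    simp only [g]; omega
  have hG : IntegrableOn (fun y : Fin n → ℝ => ∏ i, y i ^ ∑ j with g j = i, c j)
      (orderedSimplex n 1) :=
    (by fun_prop : Continuous _).continuousOn.integrableOn_compact (isCompact_orderedSimplex n 1)
  simp_rw [hoStat, prod_comp_pow_eq_prod_pow_sum_fiber _ g c]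
  rw [Pi.one_def, integral_Icc_comp_sort _ hG, integral_orderedSimplex_prod_pow _ _ zero_le_one,
    sum_fiberwise, prod_factorial_div_factorial_sum_fiber hg, one_pow, nsmul_eq_mul]
  ring
end

section
/- Let M be the (n+1)×(n+1) real matrix with entries M_{ij} = min(i,j)·(max(i,j)+1) / ((n+1)(n+2)) for i,j ∈ {1,...,n+1}. Then M is invertible and its inverse N satisfies: N_{ij}/((n+1)(n+2)) equals 2 if i = j < n+1; equals (n+1)/(n+2) if i = j = n+1; equals −1 if |i−j| = 1; and equals 0 otherwise. -/
open MeasureTheory Finset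

theorem stmt2 (n : ℕ) (hn : 1 ≤ n) (M : Matrix (Fin (n + 1)) (Fin (n + 1)) ℝ)
    (hM : ∀ i j : Fin (n + 1), M i j =
      ((min (i.val + 1) (j.val + 1) : ℕ) : ℝ) * (((max (i.val + 1) (j.val + 1) : ℕ) : ℝ) + 1) /
        (((n : ℝ) + 1) * ((n : ℝ) + 2))) :
    ∃ N : Matrix (Fin (n + 1)) (Fin (n + 1)) ℝ, M * N = 1 ∧ N * M = 1 ∧
      ∀ i j : Fin (n + 1), N i j / (((n : ℝ) + 1) * ((n : ℝ) + 2)) =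
        if i = j then (if i.val < n then 2 else ((n : ℝ) + 1) / ((n : ℝ) + 2))
        else if i.val + 1 = j.val ∨ j.val + 1 = i.val then -1 else 0 := by
  classical
  set c : ℝ := ((n : ℝ) + 1) * ((n : ℝ) + 2) with hcdef
  have h1 : (0:ℝ) < (n:ℝ) + 1 := by positivity
  have h2 : (0:ℝ) < (n:ℝ) + 2 := by positivity
  have hc0 : c ≠ 0 := by positivity
  set N : Matrix (Fin (n + 1)) (Fin (n + 1)) ℝ := fun i j =>
    if i = j then (if i.val < n then 2 * c else ((n:ℝ)+1)^2)
    else if i.val + 1 = j.val ∨ j.val + 1 = i.val then -c else 0 with hNdef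
  have hN : ∀ i j, N i j =
      if i = j then (if i.val < n then 2 * c else ((n:ℝ)+1)^2)
      else if i.val + 1 = j.val ∨ j.val + 1 = i.val then -c else 0 := fun i j => rfl
  have Msym : M.transpose = M := by
    ext i j
    rw [Matrix.transpose_apply, hM, hM, min_comm, max_comm]
  have Nsym : N.transpose = N := by
    ext i j
    rw [Matrix.transpose_apply, hN, hN]
    by_cases h : i = j
    · subst h; rfl
    · rw [if_neg h, if_neg (Ne.symm h)]
      exact if_congr or_comm rfl rfl
  have key : M * N = 1 := by
    ext i k
    rw [Matrix.mul_apply, Matrix.one_apply]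
    have hNdec : ∀ j : Fin (n+1), N j k =
        (if j = k then 2*c else 0) + (if j.val + 1 = k.val then -c else 0)
        + (if k.val + 1 = j.val then -c else 0)
        + (if j = k ∧ k.val = n then ((n:ℝ)+1)^2 - 2*c else 0) := by
      intro j
      rw [hN]
      by_cases h : j = k
      · subst h
        have e1 : ¬ (j.val + 1 = j.val) := by omega
        by_cases h2 : j.val < n
        · have e2 : j.val ≠ n := by omega
          simp [h2, e1, e2]
        · have hjn : j.val = n := by omega
          rw [if_pos rfl, if_neg h2, if_pos rfl, if_neg e1,
            if_pos (show j = j ∧ j.val = n from ⟨rfl, hjn⟩)]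
          ring
      · have e2 : ¬ (j = k ∧ k.val = n) := by tauto
        simp only [if_neg h, if_neg e2, add_zero, zero_add]
        by_cases h3 : j.val + 1 = k.val
        · have h4 : ¬ (k.val + 1 = j.val) := by omega
          simp [h3, h4]
        · by_cases h5 : k.val + 1 = j.val
          · simp [h3, h5]
          · have : ¬ (j.val + 1 = k.val ∨ k.val + 1 = j.val) := by tauto
            simp [this, h3, h5]
    calc ∑ j, M i j * N j k
        = ∑ j, ((if j = k then M i j * (2*c) else 0)
            + (if j.val + 1 = k.val then M i j * (-c) else 0)
            + (if k.val + 1 = j.val then M i j * (-c) else 0)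
            + (if j = k ∧ k.val = n then M i j * (((n:ℝ)+1)^2 - 2*c) else 0)) := by
          refine Finset.sum_congr rfl fun j _ => ?_
          rw [hNdec j]
          ring_nf
          simp only [mul_ite, ite_mul, mul_zero, zero_mul]
          ring_nf
      _ = (∑ j, if j = k then M i j * (2*c) else 0)
            + (∑ j, if j.val + 1 = k.val then M i j * (-c) else 0)
            + (∑ j, if k.val + 1 = j.val then M i j * (-c) else 0)
            + (∑ j, if j = k ∧ k.val = n then M i j * (((n:ℝ)+1)^2 - 2*c) else 0) := by
          simp [Finset.sum_add_distrib]
      _ = if i = k then 1 else 0 := by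
          have T1 : (∑ j, if j = k then M i j * (2*c) else 0) = M i k * (2*c) := by
            rw [Finset.sum_ite_eq' Finset.univ k fun j => M i j * (2*c)]
            simp
          rcases Nat.eq_zero_or_pos k.val with hk0 | hkpos
          · -- k = 0
            have T2 : (∑ j, if j.val + 1 = k.val then M i j * (-c) else 0) = 0 :=
              Finset.sum_eq_zero fun j _ => if_neg (by omega)
            have T4 : (∑ j, if j = k ∧ k.val = n then M i j * (((n:ℝ)+1)^2 - 2*c) else 0) = 0 :=
              Finset.sum_eq_zero fun j _ => if_neg (by rintro ⟨-, h⟩; omega)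
            set j1 : Fin (n+1) := ⟨k.val + 1, by omega⟩ with hj1def
            have hj1 : j1.val = k.val + 1 := rfl
            have T3 : (∑ j, if k.val + 1 = j.val then M i j * (-c) else 0) = M i j1 * (-c) := by
              calc (∑ j, if k.val + 1 = j.val then M i j * (-c) else 0)
                  = ∑ j, if j = j1 then M i j * (-c) else 0 :=
                    Finset.sum_congr rfl fun j _ =>
                      if_congr (by rw [Fin.ext_iff, hj1]; omega) rfl rfl
                _ = M i j1 * (-c) := by
                    rw [Finset.sum_ite_eq' Finset.univ j1 fun j => M i j * (-c)]; simp
            rw [T1, T2, T3, T4, hM i k, hM i j1]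
            rcases Nat.eq_zero_or_pos i.val with hi0 | hipos
            · rw [if_pos (Fin.ext (by omega))]
              rw [show min (i.val+1) (k.val+1) = 1 by omega,
                show max (i.val+1) (k.val+1) = 1 by omega,
                show min (i.val+1) (j1.val+1) = 1 by omega,
                show max (i.val+1) (j1.val+1) = 2 by omega]
              push_cast
              field_simp
              ring
            · rw [if_neg (by rw [Fin.ext_iff]; omega)]
              rw [show min (i.val+1) (k.val+1) = 1 by omega,
                show max (i.val+1) (k.val+1) = i.val+1 by omega,
                show min (i.val+1) (j1.val+1) = 2 by omega,
                show max (i.val+1) (j1.val+1) = i.val+1 by omega]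
              push_cast
              field_simp
              ring
          · set j0 : Fin (n+1) := ⟨k.val - 1, by omega⟩ with hj0def
            have hj0 : j0.val = k.val - 1 := rfl
            have T2 : (∑ j, if j.val + 1 = k.val then M i j * (-c) else 0) = M i j0 * (-c) := by
              calc (∑ j, if j.val + 1 = k.val then M i j * (-c) else 0)
                  = ∑ j, if j = j0 then M i j * (-c) else 0 :=
                    Finset.sum_congr rfl fun j _ =>
                      if_congr (by rw [Fin.ext_iff, hj0]; omega) rfl rfl
                _ = M i j0 * (-c) := by
                    rw [Finset.sum_ite_eq' Finset.univ j0 fun j => M i j * (-c)]; simp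
            rcases Nat.lt_or_ge k.val n with hkn | hkn
            · -- 1 ≤ k < n
              have T4 : (∑ j, if j = k ∧ k.val = n then M i j * (((n:ℝ)+1)^2 - 2*c) else 0) = 0 :=
                Finset.sum_eq_zero fun j _ => if_neg (by rintro ⟨-, h⟩; omega)
              set j1 : Fin (n+1) := ⟨k.val + 1, by omega⟩ with hj1def
              have hj1 : j1.val = k.val + 1 := rfl
              have T3 : (∑ j, if k.val + 1 = j.val then M i j * (-c) else 0) = M i j1 * (-c) := by
                calc (∑ j, if k.val + 1 = j.val then M i j * (-c) else 0)
                    = ∑ j, if j = j1 then M i j * (-c) else 0 :=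
                      Finset.sum_congr rfl fun j _ =>
                        if_congr (by rw [Fin.ext_iff, hj1]; omega) rfl rfl
                  _ = M i j1 * (-c) := by
                      rw [Finset.sum_ite_eq' Finset.univ j1 fun j => M i j * (-c)]; simp
              rw [T1, T2, T3, T4, hM i k, hM i j0, hM i j1]
              rcases lt_trichotomy i.val k.val with hik | hik | hik
              · rw [if_neg (by rw [Fin.ext_iff]; omega)]
                rw [show min (i.val+1) (k.val+1) = i.val+1 by omega,
                  show max (i.val+1) (k.val+1) = k.val+1 by omega,
                  show min (i.val+1) (j0.val+1) = i.val+1 by omega,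
                  show max (i.val+1) (j0.val+1) = k.val by omega,
                  show min (i.val+1) (j1.val+1) = i.val+1 by omega,
                  show max (i.val+1) (j1.val+1) = k.val+2 by omega]
                push_cast
                field_simp
                ring
              · rw [if_pos (Fin.ext (by omega))]
                rw [show min (i.val+1) (k.val+1) = k.val+1 by omega,
                  show max (i.val+1) (k.val+1) = k.val+1 by omega,
                  show min (i.val+1) (j0.val+1) = k.val by omega,
                  show max (i.val+1) (j0.val+1) = k.val+1 by omega,
                  show min (i.val+1) (j1.val+1) = k.val+1 by omega,
                  show max (i.val+1) (j1.val+1) = k.val+2 by omega]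
                push_cast
                field_simp
                ring
              · rw [if_neg (by rw [Fin.ext_iff]; omega)]
                rw [show min (i.val+1) (k.val+1) = k.val+1 by omega,
                  show max (i.val+1) (k.val+1) = i.val+1 by omega,
                  show min (i.val+1) (j0.val+1) = k.val by omega,
                  show max (i.val+1) (j0.val+1) = i.val+1 by omega,
                  show min (i.val+1) (j1.val+1) = k.val+2 by omega,
                  show max (i.val+1) (j1.val+1) = i.val+1 by omega]
                push_cast
                field_simp
                ring
            · -- k = n
              have hkn' : k.val = n := by omega
              have T3 : (∑ j, if k.val + 1 = j.val then M i j * (-c) else 0) = 0 :=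
                Finset.sum_eq_zero fun j _ => if_neg (by omega)
              have T4 : (∑ j, if j = k ∧ k.val = n then M i j * (((n:ℝ)+1)^2 - 2*c) else 0)
                  = M i k * (((n:ℝ)+1)^2 - 2*c) := by
                calc (∑ j, if j = k ∧ k.val = n then M i j * (((n:ℝ)+1)^2 - 2*c) else 0)
                    = ∑ j, if j = k then M i j * (((n:ℝ)+1)^2 - 2*c) else 0 :=
                      Finset.sum_congr rfl fun j _ =>
                        if_congr (and_iff_left hkn') rfl rfl
                  _ = M i k * (((n:ℝ)+1)^2 - 2*c) := by
                      rw [Finset.sum_ite_eq' Finset.univ k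
                        fun j => M i j * (((n:ℝ)+1)^2 - 2*c)]; simp
              rw [T1, T2, T3, T4, hM i k, hM i j0]
              rcases Nat.lt_or_ge i.val n with hin | hin
              · rw [if_neg (by rw [Fin.ext_iff]; omega)]
                rw [show min (i.val+1) (k.val+1) = i.val+1 by omega,
                  show max (i.val+1) (k.val+1) = n+1 by omega,
                  show min (i.val+1) (j0.val+1) = i.val+1 by omega,
                  show max (i.val+1) (j0.val+1) = n by omega]
                push_cast
                rw [hcdef]
                field_simp
                ring
              · have hin' : i.val = n := by omega
                rw [if_pos (Fin.ext (by omega))]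
                rw [show min (i.val+1) (k.val+1) = n+1 by omega,
                  show max (i.val+1) (k.val+1) = n+1 by omega,
                  show min (i.val+1) (j0.val+1) = n by omega,
                  show max (i.val+1) (j0.val+1) = n+1 by omega]
                push_cast
                rw [hcdef]
                field_simp
                ring
  refine ⟨N, key, ?_, ?_⟩
  · have : N * M = (M * N).transpose := by
      rw [Matrix.transpose_mul, Msym, Nsym]
    rw [this, key, Matrix.transpose_one]
  · intro i j
    rw [hN]
    by_cases h : i = j
    · subst h
      by_cases h2 : i.val < n
      · rw [if_pos rfl, if_pos h2, if_pos rfl, if_pos h2]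
        field_simp
      · rw [if_pos rfl, if_neg h2, if_pos rfl, if_neg h2]
        field_simp
        ring
    · rw [if_neg h, if_neg h]
      by_cases h3 : i.val + 1 = j.val ∨ j.val + 1 = i.val
      · rw [if_pos h3, if_pos h3]
        field_simp
      · rw [if_neg h3, if_neg h3, zero_div]
end

section
/- For every k ∈ {1,...,n} and every x ∈ [0,1]^n, the k-th order statistic satisfies x_{(k)} = ∑_{S ⊆ {1,...,n}, |S| ≥ k} (−1)^{|S|−k} · binom(|S|−1, k−1) · max_{i∈S} x_i. -/
open MeasureTheory Finset

/-!
Both sides are invariant under permuting the coordinates of `x`, so we may assume `x` is sorted.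
Then the maximum of `x` over `S` is `x m` with `m = max S`. Writing `S = insert m T` with
`T ⊆ Iio m`, the coefficient of `x m` becomes
`∑_{T ⊆ Iio m} (-1)^(|T|-b) C(|T|, b) = ∑_j C(m, j) (-1)^(j-b) C(j, b)` with `b = k - 1`,
and `C(m, j) C(j, b) = C(m, b) C(m-b, j-b)` turns this into `C(m, b)` times the alternating sum
`∑_t (-1)^t C(m-b, t)`, which vanishes unless `m = b`.
-/

section Binomial

variable {R : Type*} [CommRing R]

theorem sum_range_choose_mul_neg_one_pow_mul_choose (m b : ℕ) :
    ∑ j ∈ range (m + 1),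
        (m.choose j : R) * (if b ≤ j then (-1) ^ (j - b) * (j.choose b : R) else 0) =
      if m = b then 1 else 0 := by
  rcases lt_or_ge m b with hmb | hbm
  · rw [if_neg hmb.ne]
    refine sum_eq_zero fun j hj => ?_
    rw [if_neg (by rw [mem_range] at hj; omega), mul_zero]
  obtain ⟨d, rfl⟩ := Nat.exists_eq_add_of_le hbm
  have hterm : ∀ t, ((b + d).choose (b + t) : R) * ((-1) ^ (b + t - b) * ((b + t).choose b : R)) =
      (b + d).choose b * ((-1) ^ t * (d.choose t : R)) := by
    intro t
    have h := Nat.choose_mul (n := b + d) (Nat.le_add_right b t)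
    simp only [Nat.add_sub_cancel_left] at h ⊢
    rw [mul_left_comm, ← Nat.cast_mul, h, Nat.cast_mul]
    ring
  have halt : ∑ t ∈ range (d + 1), (-1) ^ t * (d.choose t : R) = if d = 0 then 1 else 0 := by
    exact_mod_cast congrArg (Int.cast : ℤ → R) (Int.alternating_sum_range_choose (n := d))
  rw [add_assoc, sum_range_add, sum_eq_zero fun j hj => by rw [if_neg (by simpa using hj), mul_zero],
    zero_add]
  simp only [le_add_iff_nonneg_right, zero_le, if_true, hterm, ← mul_sum, halt]
  by_cases hd : d = 0 <;> simp [hd]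

theorem sum_powerset_ite_neg_one_pow_mul_choose_card {β : Type*} (U : Finset β) (b : ℕ) :
    ∑ T ∈ U.powerset, (if b ≤ #T then (-1 : R) ^ (#T - b) * ((#T).choose b : R) else 0) =
      if #U = b then 1 else 0 := by
  rw [sum_powerset_apply_card (fun j => if b ≤ j then (-1 : R) ^ (j - b) * (j.choose b : R) else 0)]
  simp only [nsmul_eq_mul]
  exact sum_range_choose_mul_neg_one_pow_mul_choose _ _

end Binomial

theorem Finset.sum_eq_sum_sum_powerset_Iio_insert {α M : Type*} [Fintype α] [LinearOrder α]
    [LocallyFiniteOrderBot α] [AddCommMonoid M] (f : Finset α → M) (hf : f ∅ = 0) :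
    ∑ S, f S = ∑ m, ∑ T ∈ (Iio m).powerset, f (insert m T) := by
  have hmax : ∀ m (T : Finset α), T ⊆ Iio m → (insert m T).max' (insert_nonempty m T) = m :=
    fun m T hT => le_antisymm (max'_le _ _ _ fun i hi => by
      rcases mem_insert.mp hi with rfl | hi
      exacts [le_rfl, (mem_Iio.mp (hT hi)).le]) (le_max' _ _ (mem_insert_self m T))
  rw [← sum_sigma univ (fun m => (Iio m).powerset) (fun p => f (insert p.1 p.2)), ← sum_erase univ hf]
  symm
  refine sum_bij (fun p _ => insert p.1 p.2) (fun p _ => by simp) ?_ ?_ fun _ _ => rfl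
  · rintro ⟨m, T⟩ hT ⟨m', T'⟩ hT' h
    simp only [mem_sigma, mem_univ, mem_powerset, true_and] at hT hT' h
    obtain rfl : m = m' := by rw [← hmax m T hT, ← hmax m' T' hT']; simp only [h]
    have hm : ∀ U : Finset α, U ⊆ Iio m → m ∉ U := fun U hU hm => by simpa using hU hm
    rw [← erase_insert (hm T hT), ← erase_insert (hm T' hT'), h]
  · intro S hS
    have hne : S.Nonempty := nonempty_iff_ne_empty.mpr (ne_of_mem_erase hS)
    refine ⟨⟨S.max' hne, S.erase (S.max' hne)⟩, ?_, insert_erase (max'_mem S hne)⟩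
    simp only [mem_sigma, mem_univ, mem_powerset, true_and]
    intro i hi
    exact mem_Iio.mpr (lt_of_le_of_ne (le_max' S i (mem_of_mem_erase hi)) (ne_of_mem_erase hi))

section OrderStatistics

variable {n : ℕ}

theorem oStat_comp_perm (x : Fin n → ℝ) (σ : Equiv.Perm (Fin n)) (k : ℕ) :
    oStat (x ∘ σ) k = oStat x k := by
  rw [oStat, oStat, ← Multiset.map_map, Multiset.map_univ_val_equiv]

theorem oStatS_comp_perm (S : Finset (Fin n)) (x : Fin n → ℝ) (σ : Equiv.Perm (Fin n)) (j : ℕ) :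
    oStatS S (x ∘ σ) j = oStatS (S.map σ.toEmbedding) x j := by
  rw [oStatS, oStatS, map_val, Multiset.map_map]
  rfl

theorem oStat_of_monotone {x : Fin n → ℝ} (hx : Monotone x) {k : ℕ} (hk : 1 ≤ k) (hkn : k ≤ n) :
    oStat x k = x ⟨k - 1, by omega⟩ := by
  rw [oStat, if_neg (by omega), if_pos hkn, Fin.univ_val_map, Multiset.coe_sort,
    List.mergeSort_eq_self _ (List.sortedLE_ofFn_iff.mpr hx).pairwise,
    List.getD_eq_getElem _ _ (by rw [List.length_ofFn]; omega), List.getElem_ofFn]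

theorem oStatS_card_eq_sup' (S : Finset (Fin n)) (hS : S.Nonempty) (x : Fin n → ℝ) :
    oStatS S x #S = S.sup' hS x := by
  set L := (S.val.map x).sort (· ≤ ·)
  have hlen : L.length = #S := by simp [L]
  have hlast : #S - 1 < L.length := by rw [hlen]; exact Nat.sub_lt hS.card_pos one_pos
  have hmem : ∀ a, a ∈ L ↔ ∃ i ∈ S, x i = a := by simp [L]
  rw [oStatS, List.getD_eq_getElem _ _ hlast]
  apply le_antisymm
  · obtain ⟨i, hi, hxi⟩ := (hmem _).mp (List.getElem_mem hlast)
    exact hxi ▸ le_sup' x hi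
  · refine sup'_le hS x fun i hi => ?_
    obtain ⟨j, hj, hxj⟩ := List.mem_iff_getElem.mp ((hmem _).mpr ⟨i, hi, rfl⟩)
    rw [← hxj]
    rcases (Nat.le_sub_one_of_lt (hlen ▸ hj)).eq_or_lt with rfl | hlt
    · exact le_rfl
    · exact List.pairwise_iff_getElem.mp (Multiset.pairwise_sort _ _) j _ hj hlast hlt

theorem oStatS_insert_of_monotone {x : Fin n → ℝ} (hx : Monotone x) {m : Fin n}
    {T : Finset (Fin n)} (hT : T ⊆ Iio m) : oStatS (insert m T) x #(insert m T) = x m := by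
  rw [oStatS_card_eq_sup' _ (insert_nonempty m T)]
  refine le_antisymm (sup'_le _ _ fun i hi => ?_) (le_sup' x (mem_insert_self m T))
  rcases mem_insert.mp hi with rfl | hi
  exacts [le_rfl, hx (mem_Iio.mp (hT hi)).le]

noncomputable def maxExpansion (x : Fin n → ℝ) (k : ℕ) : ℝ :=
  ∑ S ∈ univ.powerset.filter (fun S : Finset (Fin n) => k ≤ #S),
    (-1 : ℝ) ^ (#S - k) * ((#S - 1).choose (k - 1) : ℝ) * oStatS S x #S

theorem maxExpansion_comp_perm (x : Fin n → ℝ) (σ : Equiv.Perm (Fin n)) (k : ℕ) :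
    maxExpansion (x ∘ σ) k = maxExpansion x k := by
  simp only [maxExpansion, powerset_univ, sum_filter]
  exact Fintype.sum_equiv σ.finsetCongr _ _ fun S => by
    simp only [Equiv.finsetCongr_apply, card_map, oStatS_comp_perm]

theorem maxExpansion_of_monotone {x : Fin n → ℝ} (hx : Monotone x) {k : ℕ} (hk : 1 ≤ k)
    (hkn : k ≤ n) : maxExpansion x k = x ⟨k - 1, by omega⟩ := by
  have hterm : ∀ m : Fin n, ∀ T ∈ (Iio m).powerset,
      (if k ≤ #(insert m T) then
          (-1 : ℝ) ^ (#(insert m T) - k) * ((#(insert m T) - 1).choose (k - 1) : ℝ) *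
            oStatS (insert m T) x #(insert m T) else 0) =
        (if k - 1 ≤ #T then (-1 : ℝ) ^ (#T - (k - 1)) * ((#T).choose (k - 1) : ℝ) else 0) *
          x m := by
    intro m T hT
    rw [mem_powerset] at hT
    rw [oStatS_insert_of_monotone hx hT, card_insert_of_notMem fun hm => by simpa using hT hm]
    simp only [Nat.add_sub_cancel, show k ≤ #T + 1 ↔ k - 1 ≤ #T by omega,
      show #T + 1 - k = #T - (k - 1) by omega, ite_mul, zero_mul]
  rw [maxExpansion, powerset_univ, sum_filter,
    sum_eq_sum_sum_powerset_Iio_insert _ (by rw [card_empty, if_neg (by omega)])]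
  calc _ = ∑ m : Fin n, if m = ⟨k - 1, by omega⟩ then x m else 0 := by
        refine sum_congr rfl fun m _ => ?_
        rw [sum_congr rfl (hterm m), ← sum_mul, sum_powerset_ite_neg_one_pow_mul_choose_card,
          Fin.card_Iio, ite_mul, one_mul, zero_mul]
        simp only [Fin.ext_iff]
    _ = x ⟨k - 1, by omega⟩ := Fintype.sum_ite_eq' _ _

end OrderStatistics

theorem stmt4_general (n k : ℕ) (hk : 1 ≤ k) (hkn : k ≤ n)
    (x : Fin n → ℝ) :
    oStat x k = ∑ S ∈ Finset.univ.powerset.filter (fun S : Finset (Fin n) => k ≤ S.card),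
      (-1 : ℝ) ^ (S.card - k) * (Nat.choose (S.card - 1) (k - 1) : ℝ) * oStatS S x S.card := by
  have hsorted := Tuple.monotone_sort x
  calc oStat x k = oStat (x ∘ Tuple.sort x) k := (oStat_comp_perm x _ k).symm
    _ = maxExpansion (x ∘ Tuple.sort x) k := by
      rw [oStat_of_monotone hsorted hk hkn, maxExpansion_of_monotone hsorted hk hkn]
    _ = maxExpansion x k := maxExpansion_comp_perm x _ k

theorem stmt4 (n k : ℕ) (hk : 1 ≤ k) (hkn : k ≤ n)
    (x : Fin n → ℝ) (hx : x ∈ Set.Icc (0 : Fin n → ℝ) 1) :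
    oStat x k = ∑ S ∈ Finset.univ.powerset.filter (fun S : Finset (Fin n) => k ≤ S.card),
      (-1 : ℝ) ^ (S.card - k) * (Nat.choose (S.card - 1) (k - 1) : ℝ) * oStatS S x S.card :=
  stmt4_general n k hk hkn x
end

section
/- For every square integrable f : [0,1]^n → ℝ and every k ∈ {1,...,n}, ∫_{[0,1]^n} f(x) · x_{(k)} dx = ∑_{S ⊆ {1,...,n}, |S| < k} ∫_0^1 ( ∫_{A_{S,y}} f(x) dx ) dy, where A_{S,y} = {x ∈ [0,1]^n : x_i ≤ y for i ∈ S and x_i ≥ y for i ∉ S}. -/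
/-!
For `x ∈ [0,1]^n` one has `x_(k) = ∫₀¹ 1[y < x_(k)] dy`, and `y < x_(k)` holds exactly when
fewer than `k` coordinates of `x` are `≤ y`. Splitting this event according to the set
`S = {i | x i ≤ y}` and applying Fubini yields the sum over `S`. The pieces are defined by
`x i ≤ y` on `S` and `y < x i` off `S`; relaxing the strict inequalities changes them only by
subsets of the null hyperplanes `{x i = y}`.
-/

open MeasureTheory Finset

theorem List.Pairwise.getElem_le_iff_lt_countP {α : Type*} [LinearOrder α] {l : List α}
    (hl : l.Pairwise (· ≤ ·)) {k : ℕ} (hk : k < l.length) (y : α) :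
    l[k] ≤ y ↔ k < l.countP (· ≤ y) := by
  have hmono : ∀ i j (hi : i < l.length) (hj : j < l.length), i ≤ j → l[i] ≤ l[j] :=
    fun i j hi hj hij => hij.lt_or_eq.elim (List.pairwise_iff_getElem.1 hl i j hi hj)
      (fun h => by subst h; rfl)
  have hsplit := congrArg (List.countP (· ≤ y)) (List.take_append_drop k l)
  rw [List.countP_append] at hsplit
  constructor
  · intro h
    have hpos : 0 < (l.drop k).countP (· ≤ y) := by
      rw [List.countP_pos_iff]
      exact ⟨l[k], List.mem_iff_getElem.2 ⟨0, by simp; omega, by simp⟩, by simpa using h⟩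
    have : (l.take k).countP (· ≤ y) = k := by
      rw [List.countP_eq_length.2, List.length_take_of_le hk.le]
      intro a ha
      obtain ⟨j, hj, rfl⟩ := List.getElem_of_mem ha
      simp only [List.length_take] at hj
      simpa using (hmono j k _ hk (by omega)).trans h
    omega
  · intro h
    by_contra! hlt
    have : (l.drop k).countP (· ≤ y) = 0 := by
      rw [List.countP_eq_zero]
      intro a ha
      obtain ⟨j, hj, rfl⟩ := List.getElem_of_mem ha
      simp only [List.length_drop] at hj
      simpa [List.getElem_drop] using hlt.trans_le (hmono k (k + j) hk (by omega) (by omega))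
    have := List.countP_le_length (p := (· ≤ y)) (l := l.take k)
    simp only [List.length_take] at this
    omega

section OrderStatistic

variable {n k : ℕ} (x : Fin n → ℝ)

theorem oStat_eq_getElem (hk : 1 ≤ k) (hkn : k ≤ n) :
    oStat x k = ((univ.val.map x).sort (· ≤ ·))[k - 1]'(by simp; omega) := by
  rw [oStat, if_neg (by omega), if_pos hkn, List.getD_eq_getElem]

theorem lt_oStat_iff (hk : 1 ≤ k) (hkn : k ≤ n) (y : ℝ) :
    y < oStat x k ↔ #{i | x i ≤ y} < k := by
  have hcount : ((univ.val.map x).sort (· ≤ ·)).countP (· ≤ y) = #{i | x i ≤ y} := by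
    rw [← Multiset.coe_countP, Multiset.sort_eq, Multiset.countP_map]
    rfl
  rw [oStat_eq_getElem x hk hkn, ← not_le,
    (Multiset.pairwise_sort _ _).getElem_le_iff_lt_countP, hcount]
  omega

theorem exists_oStat_eq (hk : 1 ≤ k) (hkn : k ≤ n) : ∃ i, oStat x k = x i := by
  have hmem : oStat x k ∈ univ.val.map x := by
    rw [oStat_eq_getElem x hk hkn, ← Multiset.mem_sort (· ≤ ·)]
    exact List.getElem_mem _
  obtain ⟨i, -, hi⟩ := Multiset.mem_map.1 hmem
  exact ⟨i, hi.symm⟩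

end OrderStatistic

section Layers

variable {n : ℕ}

def sublevelIndexEq (S : Finset (Fin n)) : Set (ℝ × (Fin n → ℝ)) :=
  {p | ({i | p.2 i ≤ p.1} : Finset (Fin n)) = S}

theorem measurableSet_sublevelIndexEq (S : Finset (Fin n)) :
    MeasurableSet (sublevelIndexEq S) := by
  have hset : sublevelIndexEq S = {p | ∀ i, p.2 i ≤ p.1 ↔ i ∈ S} := by
    ext p
    simp [sublevelIndexEq, Finset.ext_iff]
  rw [hset, measurableSet_setOfPred]
  exact Measurable.forall fun i =>
    (measurableSet_setOfPred.1 (measurableSet_le (by fun_prop) measurable_fst)).iff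
      measurable_const

theorem filter_le_eq_ae_eq (S : Finset (Fin n)) (y : ℝ) :
    {x : Fin n → ℝ | ({i | x i ≤ y} : Finset (Fin n)) = S} =ᵐ[volume]
      {x | (∀ i ∈ S, x i ≤ y) ∧ ∀ i ∉ S, y ≤ x i} := by
  have hne : ∀ᵐ x : Fin n → ℝ, ∀ i, x i ≠ y :=
    ae_all_iff.2 fun i => by
      rw [volume_pi]
      exact Measure.ae_eval_ne (α := fun _ => ℝ) (fun _ => volume) i y
  filter_upwards [hne] with x hx
  simp only [eq_iff_iff, Finset.ext_iff, Finset.mem_filter, Finset.mem_univ, true_and]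
  constructor
  · intro h
    exact ⟨fun i hi => (h i).2 hi, fun i hi => le_of_not_ge fun hle => hi ((h i).1 hle)⟩
  · rintro ⟨hle, hge⟩ i
    by_cases hi : i ∈ S
    · simp [hi, hle i hi]
    · simp [hi, lt_of_le_of_ne (hge i hi) (hx i).symm]

theorem setIntegral_indicator_sublevelIndexEq (s : Set (Fin n → ℝ)) (f : (Fin n → ℝ) → ℝ)
    (S : Finset (Fin n)) (y : ℝ) :
    ∫ x in s, (sublevelIndexEq S).indicator (fun p => f p.2) (y, x) =
      ∫ x in {x | x ∈ s ∧ (∀ i ∈ S, x i ≤ y) ∧ ∀ i ∉ S, y ≤ x i}, f x := by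
  have hmeas := (measurableSet_sublevelIndexEq S).preimage (measurable_prodMk_left (x := y))
  change ∫ x in s, (Prod.mk y ⁻¹' sublevelIndexEq S).indicator f x = _
  rw [integral_indicator hmeas, Measure.restrict_restrict hmeas, Set.inter_comm]
  exact setIntegral_congr_set ((ae_eq_refl s).inter (filter_le_eq_ae_eq S y))

theorem sum_indicator_sublevelIndexEq {k : ℕ} (g : ℝ × (Fin n → ℝ) → ℝ) (p : ℝ × (Fin n → ℝ)) :
    ∑ S ∈ univ.powerset.filter (fun S : Finset (Fin n) => S.card < k),
      (sublevelIndexEq S).indicator g p =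
      {q : ℝ × (Fin n → ℝ) | #{i | q.2 i ≤ q.1} < k}.indicator g p := by
  simp only [Set.indicator_apply, sublevelIndexEq, Set.mem_ofPred_eq]
  rw [Finset.sum_ite_eq]
  simp

end Layers

theorem setIntegral_Icc_indicator_Iio {a b c : ℝ} (hac : a ≤ c) (hcb : c ≤ b) (r : ℝ) :
    ∫ y in Set.Icc a b, (Set.Iio c).indicator (fun _ => r) y = (c - a) * r := by
  have hset : Set.Iio c ∩ Set.Icc a b = Set.Ico a c := Set.ext fun _ =>
    ⟨fun ⟨hyc, hay, _⟩ => ⟨hay, hyc⟩, fun ⟨hay, hyc⟩ => ⟨hyc, hay, hyc.le.trans hcb⟩⟩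
  rw [integral_indicator_const _ measurableSet_Iio, measureReal_restrict_apply measurableSet_Iio,
    hset, Real.volume_real_Ico_of_le hac, smul_eq_mul]

theorem setIntegral_indicator_card_lt_eq_mul_oStat {n k : ℕ} (hk : 1 ≤ k) (hkn : k ≤ n)
    (f : (Fin n → ℝ) → ℝ) {x : Fin n → ℝ} (hx : x ∈ Set.Icc (0 : Fin n → ℝ) 1) :
    ∫ y in Set.Icc (0 : ℝ) 1,
      {p : ℝ × (Fin n → ℝ) | #{i | p.2 i ≤ p.1} < k}.indicator (fun p => f p.2) (y, x) =
      f x * oStat x k := by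
  have hlayer : (fun y => {p : ℝ × (Fin n → ℝ) | #{i | p.2 i ≤ p.1} < k}.indicator
      (fun p => f p.2) (y, x)) = (Set.Iio (oStat x k)).indicator (fun _ => f x) := by
    ext y
    simp only [Set.indicator_apply, Set.mem_ofPred_eq, Set.mem_Iio, lt_oStat_iff x hk hkn]
  obtain ⟨i, hi⟩ := exists_oStat_eq x hk hkn
  rw [hlayer, setIntegral_Icc_indicator_Iio (hi ▸ hx.1 i) (hi ▸ hx.2 i), sub_zero, mul_comm]

theorem stmt6 (n k : ℕ) (hk : 1 ≤ k) (hkn : k ≤ n) (f : (Fin n → ℝ) → ℝ)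
    (hf : MemLp f 2 (volume.restrict (Set.Icc (0 : Fin n → ℝ) 1))) :
    (∫ x in Set.Icc (0 : Fin n → ℝ) 1, f x * oStat x k) =
      ∑ S ∈ Finset.univ.powerset.filter (fun S : Finset (Fin n) => S.card < k),
        ∫ y in Set.Icc (0 : ℝ) 1,
          ∫ x in {x : Fin n → ℝ | x ∈ Set.Icc (0 : Fin n → ℝ) 1 ∧
            (∀ i ∈ S, x i ≤ y) ∧ (∀ i ∉ S, y ≤ x i)}, f x := by
  set μ : Measure ℝ := volume.restrict (Set.Icc 0 1)
  set ν : Measure (Fin n → ℝ) := volume.restrict (Set.Icc 0 1)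
  have : IsFiniteMeasure ν := isFiniteMeasure_restrict.2 isCompact_Icc.measure_lt_top.ne
  have hfg : Integrable (fun p : ℝ × (Fin n → ℝ) => f p.2) (μ.prod ν) :=
    (hf.integrable one_le_two).comp_snd μ
  have hpiece : ∀ S : Finset (Fin n),
      Integrable ((sublevelIndexEq S).indicator fun p => f p.2) (μ.prod ν) :=
    fun S => hfg.indicator (measurableSet_sublevelIndexEq S)
  calc (∫ x in Set.Icc (0 : Fin n → ℝ) 1, f x * oStat x k)
      = ∫ x, ∫ y, ∑ S ∈ univ.powerset.filter (fun S : Finset (Fin n) => S.card < k),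
          (sublevelIndexEq S).indicator (fun p => f p.2) (y, x) ∂μ ∂ν := by
        refine setIntegral_congr_fun measurableSet_Icc fun x hx => ?_
        simp only [sum_indicator_sublevelIndexEq]
        exact (setIntegral_indicator_card_lt_eq_mul_oStat hk hkn f hx).symm
    _ = _ := by
        rw [← integral_prod_symm _ (integrable_finsetSum _ fun S _ => hpiece S),
          integral_finsetSum _ fun S _ => hpiece S]
        refine Finset.sum_congr rfl fun S _ => ?_
        rw [integral_prod _ (hpiece S)]
        exact integral_congr_ae (ae_of_all _ fun y =>
          setIntegral_indicator_sublevelIndexEq _ f S y)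
end
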